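/- Let a, b, c be nonnegative reals satisfying a ≤ b + c, c ≤ a + b, and 2b ≤ 2a + c. Define p_1(t) = (1/6)(1 + e^{-at} − e^{-bt} − e^{-ct}), p_2(t) = (1/6)(1 − e^{-at} − e^{-bt} + e^{-ct}), p_3(t) = (1/6)(1 − 2e^{-at} + 2e^{-bt} − e^{-ct}). Then p_1(t) ≥ 0, p_2(t) ≥ 0, and p_3(t) ≥ 0 for all t ≥ 0. -/

import Mathlib

/-!
Put `x = e^{-at}`, `y = e^{-bt}`, `z = e^{-ct}`, all in `(0, 1]`. The triangle-type inequalities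
on `a, b, c` become multiplicative inequalities such as `y z ≤ x`, so `6 p₁ ≥ (1 - y)(1 - z)` and
`6 p₂ ≥ (1 - x)(1 - y)`. For `p₃` write `z = u²` with `u = e^{-ct/2}`; then `x u ≤ y` and
`x² ≤ u` (since `c ≤ 4a`) give `6 p₃ ≥ (1 - u)(1 + u - 2x) ≥ (1 - u)(1 - x)² ≥ 0`.
-/

namespace Real

lemma exp_neg_mul_le_one {a t : ℝ} (ha : 0 ≤ a) (ht : 0 ≤ t) : exp (-a * t) ≤ 1 :=
  exp_le_one_iff.2 (by nlinarith)

lemma exp_neg_mul_mul_exp_neg_mul_le {a b c t : ℝ} (h : a ≤ b + c) (ht : 0 ≤ t) :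
    exp (-b * t) * exp (-c * t) ≤ exp (-a * t) := by
  rw [← exp_add]
  exact exp_le_exp.2 (by nlinarith)

end Real

lemma one_add_sub_sub_nonneg_of_mul_le {x y z : ℝ} (hy : y ≤ 1) (hz : z ≤ 1) (hyz : y * z ≤ x) :
    0 ≤ 1 + x - y - z := by
  nlinarith [mul_nonneg (sub_nonneg.2 hy) (sub_nonneg.2 hz)]

lemma one_sub_two_mul_add_two_mul_sub_sq_nonneg {x y u : ℝ} (hu : u ≤ 1) (hxu : x * u ≤ y)
    (hxx : x * x ≤ u) : 0 ≤ 1 - 2 * x + 2 * y - u ^ 2 := by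
  have hfactor : 0 ≤ 1 + u - 2 * x := by nlinarith [sq_nonneg (1 - x)]
  nlinarith [mul_nonneg (sub_nonneg.2 hu) hfactor]

theorem stmt4 (a b c : ℝ) (ha : 0 ≤ a) (hb : 0 ≤ b) (hc : 0 ≤ c)
    (h1 : a ≤ b + c) (h2 : c ≤ a + b) (h3 : 2 * b ≤ 2 * a + c) (t : ℝ) (ht : 0 ≤ t) :
    0 ≤ (1/6 : ℝ) * (1 + Real.exp (-a*t) - Real.exp (-b*t) - Real.exp (-c*t)) ∧
    0 ≤ (1/6 : ℝ) * (1 - Real.exp (-a*t) - Real.exp (-b*t) + Real.exp (-c*t)) ∧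
    0 ≤ (1/6 : ℝ) * (1 - 2*Real.exp (-a*t) + 2*Real.exp (-b*t) - Real.exp (-c*t)) := by
  have hx := Real.exp_neg_mul_le_one ha ht
  have hy := Real.exp_neg_mul_le_one hb ht
  refine ⟨mul_nonneg (by norm_num) ?_, mul_nonneg (by norm_num) ?_, mul_nonneg (by norm_num) ?_⟩
  · exact one_add_sub_sub_nonneg_of_mul_le hy (Real.exp_neg_mul_le_one hc ht)
      (Real.exp_neg_mul_mul_exp_neg_mul_le h1 ht)
  · linarith [one_add_sub_sub_nonneg_of_mul_le hx hy (Real.exp_neg_mul_mul_exp_neg_mul_le h2 ht)]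
  · have hsq : Real.exp (-c * t) = Real.exp (-(c / 2) * t) ^ 2 := by
      rw [← Real.exp_nat_mul]
      ring_nf
    rw [hsq]
    exact one_sub_two_mul_add_two_mul_sub_sq_nonneg
      (Real.exp_neg_mul_le_one (by linarith) ht)
      (Real.exp_neg_mul_mul_exp_neg_mul_le (by linarith) ht)
      (Real.exp_neg_mul_mul_exp_neg_mul_le (by linarith) ht)
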